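/- In misère Partizan Kayles, if the total number of squares in a position G is congruent to 1 modulo 3, then Right wins G regardless of who moves first (o⁻(G) = R). -/

import Mathlib

/-- Add a strip of length `k` to a position (strips of length 0 are discarded). -/
def addStrip (m : Multiset ℕ) (k : ℕ) : Multiset ℕ := if k = 0 then m else k ::ₘ m

/-- Left removes one square from a strip of length `n ≥ 1`, leaving strips `i` and `n-1-i`. -/
def LeftMove (G G' : Multiset ℕ) : Prop :=
  ∃ n ∈ G, ∃ i, i + 1 ≤ n ∧ G' = addStrip (addStrip (G.erase n) i) (n - 1 - i)

/-- Right removes two adjacent squares from a strip of length `n ≥ 2`, leaving `i` and `n-2-i`. -/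
def RightMove (G G' : Multiset ℕ) : Prop :=
  ∃ n ∈ G, ∃ i, i + 2 ≤ n ∧ G' = addStrip (addStrip (G.erase n) i) (n - 2 - i)

mutual
  /-- Misère play: Left, to move, wins (a player unable to move wins). -/
  inductive LeftWinsMover : Multiset ℕ → Prop
    | cannot (G : Multiset ℕ) : (¬ ∃ G', LeftMove G G') → LeftWinsMover G
    | move (G G' : Multiset ℕ) : LeftMove G G' → LeftWinsWaiter G' → LeftWinsMover G
  /-- Misère play: Left wins with Right to move. -/
  inductive LeftWinsWaiter : Multiset ℕ → Prop
    | intro (G : Multiset ℕ) : (∃ G', RightMove G G') →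
        (∀ G', RightMove G G' → LeftWinsMover G') → LeftWinsWaiter G
end

inductive Outcome | L | N | P | R
  deriving DecidableEq

open Classical in
/-- The misère outcome `o⁻(G)`. -/
noncomputable def outcome (G : Multiset ℕ) : Outcome :=
  if LeftWinsMover G then (if LeftWinsWaiter G then Outcome.L else Outcome.N)
  else (if LeftWinsWaiter G then Outcome.P else Outcome.R)

/-- The partial order on outcomes: `L` greatest, `R` least, `N` and `P` incomparable. -/
def Outcome.le (a b : Outcome) : Prop := a = b ∨ a = Outcome.R ∨ b = Outcome.L

/-- `pos k j` is the position `kS₁ + jS₂`. -/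
def pos (k j : ℕ) : Multiset ℕ := Multiset.replicate k 1 + Multiset.replicate j 2

/-!
Left's moves remove one square and Right's remove two, so each move lowers the total by a fixed
amount. Following a winning strategy for Left shows that Left can only win moving first when the
total is `≡ 0 (mod 3)` (a position without Left moves has total `0`) and moving second when it is `≡ 2`;
a total `≡ 1` is therefore lost by Left in both cases.
-/

theorem sum_addStrip (m : Multiset ℕ) (k : ℕ) : (addStrip m k).sum = m.sum + k := by
  unfold addStrip
  split <;> simp [*, Nat.add_comm]

theorem sum_addStrip_addStrip_erase {G : Multiset ℕ} {n : ℕ} (hn : n ∈ G) (i j : ℕ) :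
    (addStrip (addStrip (G.erase n) i) j).sum + n = G.sum + i + j := by
  rw [sum_addStrip, sum_addStrip, ← Multiset.sum_erase hn]
  omega

theorem LeftMove.sum_add_one {G G' : Multiset ℕ} (hm : LeftMove G G') : G'.sum + 1 = G.sum := by
  obtain ⟨n, hn, i, hi, rfl⟩ := hm
  have := sum_addStrip_addStrip_erase hn i (n - 1 - i)
  omega

theorem RightMove.sum_add_two {G G' : Multiset ℕ} (hm : RightMove G G') : G'.sum + 2 = G.sum := by
  obtain ⟨n, hn, i, hi, rfl⟩ := hm
  have := sum_addStrip_addStrip_erase hn i (n - 2 - i)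
  omega

theorem exists_leftMove_of_sum_ne_zero {G : Multiset ℕ} (h : G.sum ≠ 0) : ∃ G', LeftMove G G' := by
  obtain ⟨n, hn, hn0⟩ : ∃ n ∈ G, n ≠ 0 := by simpa [Multiset.sum_eq_zero_iff] using h
  exact ⟨_, n, hn, 0, by omega, rfl⟩

mutual
theorem LeftWinsMover.sum_mod_three {G : Multiset ℕ} : LeftWinsMover G → G.sum % 3 = 0
  | .cannot _ hstuck => by
    have hzero : G.sum = 0 := not_not.mp (mt exists_leftMove_of_sum_ne_zero hstuck)
    simp [hzero]
  | .move _ _ hL hW => by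
    have := hW.sum_mod_three
    have := hL.sum_add_one
    omega

theorem LeftWinsWaiter.sum_mod_three {G : Multiset ℕ} : LeftWinsWaiter G → G.sum % 3 = 2
  | .intro _ ⟨_, hR⟩ hreply => by
    have := (hreply _ hR).sum_mod_three
    have := hR.sum_add_two
    omega
end

theorem kayles_sum_one_mod_three (G : Multiset ℕ) (hG : 0 ∉ G)
    (h : G.sum % 3 = 1) : outcome G = Outcome.R := by
  have hM : ¬ LeftWinsMover G := fun hM => by simp [hM.sum_mod_three] at h
  have hW : ¬ LeftWinsWaiter G := fun hW => by simp [hW.sum_mod_three] at h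
  simp [outcome, hM, hW]
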